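/- arXiv:1404.1549 — 3 statements merged into one kernel-verified Lean document; each statement's English description precedes it below -/
import Mathlib

section
/- Let G be a connected non-bipartite graph and let p : X → G be a double covering such that X is bipartite. Then X is the Kronecker double covering over G; that is, there is a graph isomorphism φ : X → K_2 × G with pr_G ∘ φ = p, where pr_G : K_2 × G → G is the second projection. -/
/-- A graph: a vertex type with a symmetric edge relation (loops allowed). -/
structure Graph' where
  V : Type
  E : V → V → Prop
  symm : ∀ ⦃x y⦄, E x y → E y x

/-- Graph homomorphisms. -/
def Graph'.Hom (G H : Graph') : Type :=
  {f : G.V → H.V // ∀ ⦃x y⦄, G.E x y → H.E (f x) (f y)}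

/-- Graph isomorphisms: bijective homomorphisms whose inverse is a homomorphism. -/
structure Graph'.Iso (G H : Graph') extends G.V ≃ H.V where
  edge_iff : ∀ x y, G.E x y ↔ H.E (toEquiv x) (toEquiv y)

/-- The complete graph `K₂` on two vertices. -/
def K2 : Graph' := ⟨Fin 2, fun x y => x ≠ y, fun _ _ h => h.symm⟩

/-- The tensor (categorical) product of graphs. -/
def Graph'.tensor (G H : Graph') : Graph' :=
  ⟨G.V × H.V, fun p q => G.E p.1 q.1 ∧ H.E p.2 q.2,
   fun _ _ h => ⟨G.symm h.1, H.symm h.2⟩⟩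

/-- No isolated vertices. -/
def Graph'.NoIsolated (G : Graph') : Prop := ∀ x, ∃ y, G.E x y

/-- The box complex `B(G)`: pairs of nonempty subsets `(σ, τ)` with `σ × τ ⊆ E(G)`. -/
def Graph'.Box (G : Graph') : Type :=
  {p : Set G.V × Set G.V //
    p.1.Nonempty ∧ p.2.Nonempty ∧ ∀ x ∈ p.1, ∀ y ∈ p.2, G.E x y}

instance (G : Graph') : PartialOrder G.Box where
  le a b := a.1.1 ⊆ b.1.1 ∧ a.1.2 ⊆ b.1.2
  le_refl a := ⟨subset_rfl, subset_rfl⟩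
  le_trans a b c h1 h2 := ⟨h1.1.trans h2.1, h1.2.trans h2.2⟩
  le_antisymm a b h1 h2 :=
    Subtype.ext (Prod.ext (h1.1.antisymm h2.1) (h1.2.antisymm h2.2))

/-- The canonical involution `(σ,τ) ↦ (τ,σ)` of the box complex. -/
def Graph'.Box.flip {G : Graph'} (p : G.Box) : G.Box :=
  ⟨(p.1.2, p.1.1), p.2.2.1, p.2.1, fun x hx y hy => G.symm (p.2.2.2 y hy x hx)⟩

/-- A graph is connected if any two vertices are joined by a walk. -/
def Graph'.Connected (G : Graph') : Prop := ∀ x y : G.V, Relation.ReflTransGen G.E x y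

/-- A graph is bipartite if it admits a homomorphism to `K₂`. -/
def Graph'.Bipartite (G : Graph') : Prop :=
  ∃ c : G.V → Fin 2, ∀ ⦃x y⦄, G.E x y → c x ≠ c y

/-- A covering: a homomorphism restricting to a bijection on each neighborhood. -/
def Graph'.IsCovering {X G : Graph'} (p : X.Hom G) : Prop :=
  ∀ x : X.V, Set.BijOn p.1 {y | X.E x y} {y | G.E (p.1 x) y}

/-- A double covering: a covering all of whose fibers have exactly two elements. -/
def Graph'.IsDoubleCovering {X G : Graph'} (p : X.Hom G) : Prop :=
  Graph'.IsCovering p ∧ ∀ v : G.V, ∃ a b : X.V, a ≠ b ∧ {x | p.1 x = v} = {a, b}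

/-! Fix a proper 2-colouring `c` of `X`. If one fibre of `p` is monochromatic, lifting an edge
`v — w` of `G` to both points over `w` shows that the fibre over `w` is monochromatic too; by
connectivity every fibre would then be monochromatic and `c` would descend to a 2-colouring of `G`.
So the two points of each fibre get different colours, `x ↦ (c x, p x)` is a bijection
`X → K₂ × G`, and the covering property turns it into a graph isomorphism. -/

theorem Fin.eq_of_ne_of_ne_two {a b c : Fin 2} (ha : a ≠ c) (hb : b ≠ c) : a = b := by
  omega

namespace Graph'

variable {X G : Graph'} {p : X.Hom G}

theorem IsCovering.exists_lift (hp : IsCovering p) {x : X.V} {w : G.V} (h : G.E (p.1 x) w) :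
    ∃ y, X.E x y ∧ p.1 y = w :=
  (hp x).2.2 h

theorem IsDoubleCovering.exists_fiber (hp : IsDoubleCovering p) (v : G.V) :
    ∃ a b, a ≠ b ∧ p.1 a = v ∧ p.1 b = v ∧ ∀ x, p.1 x = v → x = a ∨ x = b := by
  obtain ⟨a, b, hab, hfib⟩ := hp.2 v
  have hmem (x : X.V) : p.1 x = v ↔ x = a ∨ x = b := Set.ext_iff.1 hfib x
  exact ⟨a, b, hab, (hmem a).2 (.inl rfl), (hmem b).2 (.inr rfl), fun x => (hmem x).1⟩

theorem IsDoubleCovering.surjective (hp : IsDoubleCovering p) : Function.Surjective p.1 := by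
  intro v
  obtain ⟨a, -, -, ha, -⟩ := hp.exists_fiber v
  exact ⟨a, ha⟩

theorem IsDoubleCovering.eq_or_eq_of_map_eq (hp : IsDoubleCovering p) {x y z : X.V} (hxy : x ≠ y)
    (hx : p.1 x = p.1 z) (hy : p.1 y = p.1 z) : z = x ∨ z = y := by
  obtain ⟨a, b, -, -, -, mem⟩ := hp.exists_fiber (p.1 z)
  rcases mem x hx with rfl | rfl <;> rcases mem y hy with rfl | rfl <;>
    rcases mem z rfl with rfl | rfl <;> simp_all

def FiberMonochromatic {α : Type*} (p : X.Hom G) (c : X.V → α) (v : G.V) : Prop :=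
  ∀ ⦃a b⦄, p.1 a = v → p.1 b = v → c a = c b

variable {c : X.V → Fin 2}

theorem IsCovering.fiberMonochromatic_of_adj (hc : ∀ ⦃x y⦄, X.E x y → c x ≠ c y)
    (hp : IsCovering p) {v w : G.V} (hvw : G.E v w) (hv : FiberMonochromatic p c v) :
    FiberMonochromatic p c w := by
  intro a b ha hb
  obtain ⟨s, has, hs⟩ := hp.exists_lift (x := a) (w := v) (ha ▸ G.symm hvw)
  obtain ⟨t, hbt, ht⟩ := hp.exists_lift (x := b) (w := v) (hb ▸ G.symm hvw)
  exact Fin.eq_of_ne_of_ne_two (hc has) (hv hs ht ▸ hc hbt)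

theorem IsCovering.fiberMonochromatic_of_connected (hc : ∀ ⦃x y⦄, X.E x y → c x ≠ c y)
    (hp : IsCovering p) (hG : G.Connected) {v : G.V} (hv : FiberMonochromatic p c v) (w : G.V) :
    FiberMonochromatic p c w := by
  induction hG v w with
  | refl => exact hv
  | tail _ hE ih => exact hp.fiberMonochromatic_of_adj hc hE ih

theorem IsCovering.bipartite_of_fiberMonochromatic (hc : ∀ ⦃x y⦄, X.E x y → c x ≠ c y)
    (hp : IsCovering p) (hsurj : Function.Surjective p.1)
    (hmono : ∀ v, FiberMonochromatic p c v) : G.Bipartite := by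
  choose s hs using hsurj
  refine ⟨c ∘ s, fun v w hvw => ?_⟩
  obtain ⟨t, hst, ht⟩ := hp.exists_lift (x := s v) (w := w) ((hs v).symm ▸ hvw)
  exact fun h => hc hst (h.trans (hmono w (hs w) ht))

theorem IsDoubleCovering.color_ne_of_map_eq (hc : ∀ ⦃x y⦄, X.E x y → c x ≠ c y)
    (hp : IsDoubleCovering p) (hG : G.Connected) (hnbip : ¬ G.Bipartite)
    {x y : X.V} (hxy : x ≠ y) (hpxy : p.1 x = p.1 y) : c x ≠ c y := by
  intro hcxy
  have hfiber : ∀ a, p.1 a = p.1 y → c a = c y := fun a ha => by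
    rcases hp.eq_or_eq_of_map_eq hxy (hpxy.trans ha.symm) ha.symm with rfl | rfl
    exacts [hcxy, rfl]
  have hmono : FiberMonochromatic p c (p.1 y) := fun a b ha hb =>
    (hfiber a ha).trans (hfiber b hb).symm
  exact hnbip <| hp.1.bipartite_of_fiberMonochromatic hc hp.surjective
    (hp.1.fiberMonochromatic_of_connected hc hG hmono)

theorem IsDoubleCovering.bijective_color_prod (hp : IsDoubleCovering p)
    (hsep : ∀ ⦃x y⦄, x ≠ y → p.1 x = p.1 y → c x ≠ c y) :
    Function.Bijective fun x => (c x, p.1 x) := by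
  refine ⟨fun x y hxy => ?_, fun ⟨k, v⟩ => ?_⟩
  · by_contra hne
    exact hsep hne (congrArg Prod.snd hxy) (congrArg Prod.fst hxy)
  · obtain ⟨a, b, hab, hpa, hpb, -⟩ := hp.exists_fiber v
    by_cases hk : c a = k
    · exact ⟨a, Prod.ext hk hpa⟩
    · exact ⟨b, Prod.ext
        (Fin.eq_of_ne_of_ne_two (hsep hab (hpa.trans hpb.symm)).symm (Ne.symm hk)) hpb⟩

theorem IsCovering.edge_iff_of_injective (hc : ∀ ⦃x y⦄, X.E x y → c x ≠ c y)
    (hp : IsCovering p) (hinj : Function.Injective fun x => (c x, p.1 x)) (x y : X.V) :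
    X.E x y ↔ c x ≠ c y ∧ G.E (p.1 x) (p.1 y) := by
  refine ⟨fun h => ⟨hc h, p.2 h⟩, fun ⟨hcxy, hpxy⟩ => ?_⟩
  obtain ⟨s, hxs, hs⟩ := hp.exists_lift hpxy
  have hsy : s = y := hinj <| Prod.ext (Fin.eq_of_ne_of_ne_two (hc hxs).symm hcxy.symm) hs
  exact hsy ▸ hxs

end Graph'

/-- if `G` is connected and non-bipartite and `p : X → G` is a double
covering with `X` bipartite, then `X` is the Kronecker double covering of `G`: there
is a graph isomorphism `φ : X → K₂ × G` with `pr_G ∘ φ = p`. -/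
theorem bipartite_double_covering_is_kronecker
    (G X : Graph') (hconn : G.Connected) (hnbip : ¬ G.Bipartite)
    (hXbip : X.Bipartite) (p : X.Hom G) (hp : Graph'.IsDoubleCovering p) :
    ∃ φ : X.Iso (K2.tensor G), ∀ x : X.V, (φ.toEquiv x).2 = p.1 x := by
  obtain ⟨c, hc⟩ := hXbip
  have hbij := hp.bijective_color_prod fun _ _ => hp.color_ne_of_map_eq hc hconn hnbip
  exact ⟨⟨Equiv.ofBijective _ hbij, hp.1.edge_iff_of_injective hc hbij.1⟩, fun _ => rfl⟩
end

section
/- Let (X, ε) be a 2-colored graph admitting an odd involution. Then the simplicial complexes N_1(X) and N_2(X) are isomorphic. In particular, for every graph G the complexes N_1(K_2 × G), N_2(K_2 × G) and N(G) are pairwise isomorphic, where K_2 × G is 2-colored by the first projection. -/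
/-- An abstract simplicial complex, given by its vertex type and its simplices
(nonempty finite vertex sets). -/
structure SComplex where
  V : Type
  S : Finset V → Prop

/-- Isomorphism of abstract simplicial complexes: a bijection of vertex sets under
which a finite set is a simplex iff its image is a simplex. -/
def SComplex.Iso (A B : SComplex) : Prop :=
  ∃ e : A.V ≃ B.V, ∀ s : Finset A.V, A.S s ↔ B.S (s.map e.toEmbedding)

/-- The neighborhood complex `N(G)`: vertices are the non-isolated vertices of `G`,
simplices the nonempty finite sets contained in the neighborhood of some vertex. -/
def Graph'.NC (G : Graph') : SComplex where
  V := {x : G.V // ∃ y, G.E x y}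
  S s := s.Nonempty ∧ ∃ v : G.V, ∀ x ∈ s, G.E v x.val

/-- For a 2-colored graph `(X, ε)`, `Nᵢ(X)` is the full subcomplex of `N(X)` induced
on the non-isolated vertices of color `i`. -/
def Graph'.NCi (X : Graph') (ε : X.V → Fin 2) (i : Fin 2) : SComplex where
  V := {x : X.V // (∃ y, X.E x y) ∧ ε x = i}
  S s := s.Nonempty ∧ ∃ v : X.V, ∀ x ∈ s, X.E v x.val

namespace SComplex

theorem iso_of_equiv {A B : SComplex} (e : A.V ≃ B.V)
    (h : ∀ s, A.S s → B.S (s.map e.toEmbedding))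
    (h' : ∀ t, B.S t → A.S (t.map e.symm.toEmbedding)) : A.Iso B :=
  ⟨e, fun s => ⟨h s, fun hs => e.finsetCongr.symm_apply_apply s ▸ h' _ hs⟩⟩

theorem Iso.symm {A B : SComplex} : A.Iso B → B.Iso A := by
  rintro ⟨e, he⟩
  refine iso_of_equiv e.symm (fun t ht => (he _).2 ?_) (fun s hs => (he s).1 hs)
  rwa [← e.finsetCongr.apply_symm_apply t] at ht

theorem Iso.trans {A B C : SComplex} : A.Iso B → B.Iso C → A.Iso C := by
  rintro ⟨e, he⟩ ⟨f, hf⟩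
  refine ⟨e.trans f, fun s => ?_⟩
  rw [he, hf, Finset.map_map]
  rfl

end SComplex

namespace Graph'

variable {X : Graph'} {ε : X.V → Fin 2} {i j : Fin 2} {τ : X.V → X.V}

theorem NCi_S_map_of_hom (hτ : ∀ ⦃x y⦄, X.E x y → X.E (τ x) (τ y))
    (g : (X.NCi ε i).V ↪ (X.NCi ε j).V) (hg : ∀ x, (g x).val = τ x.val)
    (s : Finset (X.NCi ε i).V) (hs : (X.NCi ε i).S s) : (X.NCi ε j).S (s.map g) := by
  obtain ⟨hne, v, hv⟩ := hs
  refine ⟨hne.map, τ v, Finset.forall_mem_map.2 fun x hx => ?_⟩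
  exact (hg x).symm ▸ hτ (hv x hx)

def NCiEquivOfInvolution (hτ : ∀ ⦃x y⦄, X.E x y → X.E (τ x) (τ y))
    (hinv : Function.Involutive τ) (hcol : ∀ x, ε x = i ↔ ε (τ x) = j) :
    (X.NCi ε i).V ≃ (X.NCi ε j).V where
  toFun x := ⟨τ x.1, x.2.1.elim fun z h => ⟨τ z, hτ h⟩, (hcol x.1).1 x.2.2⟩
  invFun y := ⟨τ y.1, y.2.1.elim fun z h => ⟨τ z, hτ h⟩, (hcol _).2 (by rw [hinv]; exact y.2.2)⟩
  left_inv x := Subtype.ext (hinv x.1)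
  right_inv y := Subtype.ext (hinv y.1)

theorem NCi_iso_of_involution (hτ : ∀ ⦃x y⦄, X.E x y → X.E (τ x) (τ y))
    (hinv : Function.Involutive τ) (hcol : ∀ x, ε x = i ↔ ε (τ x) = j) :
    (X.NCi ε i).Iso (X.NCi ε j) :=
  SComplex.iso_of_equiv (NCiEquivOfInvolution hτ hinv hcol)
    (NCi_S_map_of_hom hτ _ fun _ => by rfl) (NCi_S_map_of_hom hτ _ fun _ => by rfl)

theorem NCi_zero_iso_NCi_one_of_odd_involution (hτ : ∀ ⦃x y⦄, X.E x y → X.E (τ x) (τ y))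
    (hinv : Function.Involutive τ) (hodd : ∀ x, ε (τ x) ≠ ε x) :
    (X.NCi ε 0).Iso (X.NCi ε 1) :=
  NCi_iso_of_involution hτ hinv fun x => by have := hodd x; omega

section Tensor

variable (G : Graph')

def tensorNCiZeroEquivNC :
    ((K2.tensor G).NCi (fun q : Fin 2 × G.V => q.1) 0).V ≃ G.NC.V where
  toFun x := ⟨x.1.2, x.2.1.elim fun y h => ⟨y.2, h.2⟩⟩
  invFun v := ⟨((0 : Fin 2), v.1), v.2.elim fun w h => ⟨((1 : Fin 2), w), zero_ne_one, h⟩, rfl⟩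
  left_inv x := Subtype.ext (Prod.ext x.2.2.symm rfl)
  right_inv _ := rfl

theorem tensor_NCi_zero_iso_NC :
    ((K2.tensor G).NCi (fun q : Fin 2 × G.V => q.1) 0).Iso G.NC := by
  refine SComplex.iso_of_equiv (tensorNCiZeroEquivNC G) ?_ ?_
  · rintro s ⟨hne, v, hv⟩
    exact ⟨hne.map, v.2, Finset.forall_mem_map.2 fun x hx => (hv x hx).2⟩
  · rintro s ⟨hne, w, hv⟩
    exact ⟨hne.map, ((1 : Fin 2), w),
      Finset.forall_mem_map.2 fun x hx => ⟨one_ne_zero, hv x hx⟩⟩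

theorem tensor_NCi_zero_iso_NCi_one :
    ((K2.tensor G).NCi (fun q : Fin 2 × G.V => q.1) 0).Iso
      ((K2.tensor G).NCi (fun q : Fin 2 × G.V => q.1) 1) := by
  refine NCi_zero_iso_NCi_one_of_odd_involution (τ := fun q : Fin 2 × G.V => (q.1 + 1, q.2))
    ?_ ?_ ?_
  · rintro ⟨a : Fin 2, v⟩ ⟨b : Fin 2, w⟩ ⟨hab : a ≠ b, hvw⟩
    exact ⟨show a + 1 ≠ b + 1 by omega, hvw⟩
  · rintro ⟨a : Fin 2, v⟩
    exact Prod.ext (show a + 1 + 1 = a by omega) rfl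
  · rintro ⟨a : Fin 2, v⟩
    show a + 1 ≠ a
    omega

end Tensor

end Graph'

/-- if a 2-colored graph `(X, ε)` admits an odd involution, then
`N₁(X) ≅ N₂(X)`; in particular, for every graph `G`, the complexes `N₁(K₂ × G)`,
`N₂(K₂ × G)` and `N(G)` are pairwise isomorphic (with `K₂ × G` colored by the first
projection). -/
theorem NCi_iso_of_odd_involution :
    (∀ (X : Graph') (ε : X.V → Fin 2), (∀ ⦃x y⦄, X.E x y → ε x ≠ ε y) →
      ∀ τ : X.V → X.V, (∀ ⦃x y⦄, X.E x y → X.E (τ x) (τ y)) →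
        (∀ x, τ (τ x) = x) → (∀ x, ε (τ x) ≠ ε x) →
          ((X.NCi ε 0).Iso (X.NCi ε 1))) ∧
    (∀ G : Graph',
      (((K2.tensor G).NCi (fun q : Fin 2 × G.V => q.1) 0).Iso
        ((K2.tensor G).NCi (fun q : Fin 2 × G.V => q.1) 1)) ∧
      (((K2.tensor G).NCi (fun q : Fin 2 × G.V => q.1) 0).Iso G.NC) ∧
      (((K2.tensor G).NCi (fun q : Fin 2 × G.V => q.1) 1).Iso G.NC)) :=
  ⟨fun _ _ _ _ hτ hinv hodd => Graph'.NCi_zero_iso_NCi_one_of_odd_involution hτ hinv hodd,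
    fun G => ⟨Graph'.tensor_NCi_zero_iso_NCi_one G, Graph'.tensor_NCi_zero_iso_NC G,
      (Graph'.tensor_NCi_zero_iso_NCi_one G).symm.trans (Graph'.tensor_NCi_zero_iso_NC G)⟩⟩
end

section
/- Let G be a connected graph with at least one edge. Then the box complex B(G) is a connected poset (any two elements are joined by a finite sequence of elements in which consecutive elements are comparable) if and only if G is not bipartite. -/
/-!
Write `a ~ b` for linkedness in `B(G)` and `A†` for the flip `(τ, σ)` of `A = (σ, τ)`; every
`A` lies above an atom `({x}, {y})`. Two atoms sharing a coordinate are linked through the box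
with a doubled coordinate, so walking along an edge `x — z` from the atom `({x}, {y})` reaches
`({z}, {x})†`. By induction along walks, in a connected graph every `a` is linked to `A` or to
`A†`, and the two cases are exclusive unless `A ~ A†`, in which case `B(G)` is connected.
Otherwise the side of `A` that `({x}, {y})` falls on 2-colours `G`. Conversely, a 2-colouring of
`G` is constant on `σ` for every `(σ, τ)`, this colour is invariant under comparability, and it
differs between `A` and `A†`.
-/

namespace Graph'

variable {G : Graph'}

theorem bipartite_of_iff_not (P : G.V → Prop) (hP : ∀ ⦃x y⦄, G.E x y → (P x ↔ ¬ P y)) :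
    G.Bipartite := by
  classical
  refine ⟨fun x => if P x then 0 else 1, fun x y hxy => ?_⟩
  by_cases hx : P x
  · simp [hx, (hP hxy).1 hx]
  · simp [hx, not_not.1 (mt (hP hxy).2 hx)]

namespace Box

def Linked (a b : G.Box) : Prop :=
  Relation.ReflTransGen (fun p q : G.Box => p ≤ q ∨ q ≤ p) a b

namespace Linked

@[refl]
theorem refl (a : G.Box) : a.Linked a := Relation.ReflTransGen.refl

theorem of_le {a b : G.Box} (h : a ≤ b) : a.Linked b := Relation.ReflTransGen.single (Or.inl h)

theorem trans {a b c : G.Box} (hab : a.Linked b) (hbc : b.Linked c) : a.Linked c :=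
  Relation.ReflTransGen.trans hab hbc

theorem symm {a b : G.Box} (h : a.Linked b) : b.Linked a := by
  induction h with
  | refl => rfl
  | tail _ hbc ih => exact Linked.trans (Relation.ReflTransGen.single hbc.symm) ih

theorem of_ge {a b : G.Box} (h : b ≤ a) : a.Linked b := (of_le h).symm

theorem iff_of_le_iff {P : G.Box → Prop} (hP : ∀ ⦃a b : G.Box⦄, a ≤ b → (P a ↔ P b))
    {a b : G.Box} (h : a.Linked b) : P a ↔ P b := by
  induction h with
  | refl => rfl
  | tail _ hbc ih => exact ih.trans (hbc.elim (fun h => hP h) fun h => (hP h).symm)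

end Linked

theorem flip_le_flip {a b : G.Box} (h : a ≤ b) : a.flip ≤ b.flip := ⟨h.2, h.1⟩

theorem Linked.flip {a b : G.Box} (h : a.Linked b) : a.flip.Linked b.flip :=
  Relation.ReflTransGen.lift Box.flip (fun _ _ hab => hab.imp flip_le_flip flip_le_flip) _ _ h

theorem linked_flip_iff_flip_linked {a b : G.Box} : a.Linked b.flip ↔ a.flip.Linked b :=
  ⟨Linked.flip, Linked.flip⟩

def atom {x y : G.V} (h : G.E x y) : G.Box :=
  ⟨({x}, {y}), Set.singleton_nonempty x, Set.singleton_nonempty y, by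
    rintro a rfl b rfl
    exact h⟩

theorem exists_atom_le (a : G.Box) : ∃ x y, ∃ h : G.E x y, atom h ≤ a := by
  obtain ⟨x, hx⟩ := a.2.1
  obtain ⟨y, hy⟩ := a.2.2.1
  exact ⟨x, y, a.2.2.2 x hx y hy, Set.singleton_subset_iff.2 hx, Set.singleton_subset_iff.2 hy⟩

theorem atom_linked_atom_of_same_fst {x y y' : G.V} (h : G.E x y) (h' : G.E x y') :
    (atom h).Linked (atom h') := by
  let b : G.Box := ⟨({x}, {y, y'}), Set.singleton_nonempty x, Set.insert_nonempty y {y'}, by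
    rintro a rfl b (rfl | rfl)
    exacts [h, h']⟩
  have hle : ∀ {z} (hz : G.E x z), z ∈ ({y, y'} : Set G.V) → atom hz ≤ b :=
    fun _ hz => ⟨subset_rfl, Set.singleton_subset_iff.2 hz⟩
  exact (Linked.of_le (hle h (.inl rfl))).trans (Linked.of_ge (hle h' (.inr rfl)))

theorem atom_linked_or_flip_linked_of_walk {p q : G.V} (hpq : G.E p q) {x : G.V}
    (hxp : Relation.ReflTransGen G.E x p) {y : G.V} (hxy : G.E x y) :
    (atom hxy).Linked (atom hpq) ∨ (atom hxy).flip.Linked (atom hpq) := by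
  induction hxp using Relation.ReflTransGen.head_induction_on generalizing y with
  | refl => exact .inl (atom_linked_atom_of_same_fst hxy hpq)
  | @head x z hxz _ ih =>
    have hstep := atom_linked_atom_of_same_fst hxy hxz
    rcases ih (G.symm hxz) with h | h
    · exact .inr (hstep.flip.trans h)
    · exact .inl (hstep.trans h)

theorem linked_or_flip_linked (hconn : G.Connected) (a A : G.Box) :
    a.Linked A ∨ a.flip.Linked A := by
  obtain ⟨x, y, hxy, hxy_le⟩ := a.exists_atom_le
  obtain ⟨p, q, hpq, hpq_le⟩ := A.exists_atom_le
  have hA : (atom hpq).Linked A := .of_le hpq_le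
  rcases atom_linked_or_flip_linked_of_walk hpq (hconn x p) hxy with h | h
  · exact .inl ((Linked.of_ge hxy_le).trans (h.trans hA))
  · exact .inr ((Linked.of_ge (flip_le_flip hxy_le)).trans (h.trans hA))

theorem linked_flip_of_linked_of_flip_linked {a A : G.Box} (h : a.Linked A)
    (h' : a.flip.Linked A) : A.Linked A.flip :=
  h.symm.trans (linked_flip_iff_flip_linked.2 h')

theorem linked_of_linked_flip (hconn : G.Connected) {A : G.Box} (hA : A.Linked A.flip)
    (a b : G.Box) : a.Linked b := by
  have hlinked : ∀ a : G.Box, a.Linked A := fun a =>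
    (linked_or_flip_linked hconn a A).elim id fun h =>
      (linked_flip_iff_flip_linked.2 h).trans hA.symm
  exact (hlinked a).trans (hlinked b).symm

theorem bipartite_of_not_linked_flip (hconn : G.Connected) {A : G.Box}
    (hA : ¬ A.Linked A.flip) : G.Bipartite := by
  refine bipartite_of_iff_not (fun x => ∃ y, ∃ h : G.E x y, (atom h).Linked A) fun x y hxy => ?_
  have hx : (∃ y', ∃ h : G.E x y', (atom h).Linked A) ↔ (atom hxy).Linked A :=
    ⟨fun ⟨_, h, hlink⟩ => (atom_linked_atom_of_same_fst hxy h).trans hlink,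
      fun h => ⟨y, hxy, h⟩⟩
  have hy : (∃ x', ∃ h : G.E y x', (atom h).Linked A) ↔ (atom hxy).flip.Linked A :=
    ⟨fun ⟨_, h, hlink⟩ => (atom_linked_atom_of_same_fst (G.symm hxy) h).trans hlink,
      fun h => ⟨x, G.symm hxy, h⟩⟩
  rw [hx, hy]
  have hboth := linked_flip_of_linked_of_flip_linked (a := atom hxy) (A := A)
  have heither := linked_or_flip_linked hconn (atom hxy) A
  tauto

theorem color_eq_of_mem_fst {c : G.V → Fin 2} (hc : ∀ ⦃x y⦄, G.E x y → c x ≠ c y)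
    (a : G.Box) {x x' : G.V} (hx : x ∈ a.1.1) (hx' : x' ∈ a.1.1) : c x = c x' := by
  obtain ⟨y, hy⟩ := a.2.2.1
  have hfin : ∀ i j k : Fin 2, i ≠ k → j ≠ k → i = j := by decide
  exact hfin _ _ _ (hc (a.2.2.2 x hx y hy)) (hc (a.2.2.2 x' hx' y hy))

end Box

theorem Bipartite.not_linked_flip (hbip : G.Bipartite) (A : G.Box) : ¬ A.Linked A.flip := by
  obtain ⟨c, hc⟩ := hbip
  obtain ⟨x, hx⟩ := A.2.1
  obtain ⟨y, hy⟩ := A.2.2.1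
  have hinv : ∀ ⦃a b : G.Box⦄, a ≤ b →
      ((∀ z ∈ a.1.1, c z = c x) ↔ ∀ z ∈ b.1.1, c z = c x) := by
    intro a b hab
    refine ⟨fun ha z hz => ?_, fun hb z hz => hb z (hab.1 hz)⟩
    obtain ⟨w, hw⟩ := a.2.1
    exact (Box.color_eq_of_mem_fst hc b hz (hab.1 hw)).trans (ha w hw)
  intro hlink
  have hA : ∀ z ∈ A.1.1, c z = c x := fun z hz => Box.color_eq_of_mem_fst hc A hz hx
  exact hc (A.2.2.2 x hx y hy) ((hlink.iff_of_le_iff hinv).1 hA y hy).symm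

end Graph'

/-- for a connected graph `G` with at least one edge, the box complex
`B(G)` is a connected poset (any two elements are joined by a finite sequence of
elements in which consecutive elements are comparable) iff `G` is not bipartite. -/
theorem box_connected_iff_nonbipartite (G : Graph')
    (hconn : G.Connected) (hedge : ∃ x y : G.V, G.E x y) :
    (∀ a b : G.Box, Relation.ReflTransGen (fun p q : G.Box => p ≤ q ∨ q ≤ p) a b) ↔
      ¬ G.Bipartite := by
  obtain ⟨p, q, hpq⟩ := hedge
  let A : G.Box := Graph'.Box.atom hpq
  refine ⟨fun hlinked hbip => hbip.not_linked_flip A (hlinked A A.flip), fun hnb => ?_⟩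
  by_cases hA : A.Linked A.flip
  · exact Graph'.Box.linked_of_linked_flip hconn hA
  · exact absurd (Graph'.Box.bipartite_of_not_linked_flip hconn hA) hnb
end
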